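/- Let H be a finite group of d×d integer matrices of determinant ±1, M a dilation matrix with MEM^{−1} ∈ H for all E ∈ H, and suppose each digit s_j satisfies E s_j = M r_j^E + s_j with r_j^E ∈ ℤ^d, for all E ∈ H. Let c ∈ ℤ^d. Then a trigonometric polynomial m_0 is H-symmetric with respect to c (i.e., m_0(ξ) = e^{2πi(c−Ec,ξ)} m_0(E^*ξ) for all E ∈ H) if and only if its polyphase components satisfy μ_{0j}(ξ) = μ_{0j}(M^* E^* M^{*−1} ξ) e^{2πi(r_j^E, ξ)} e^{2πi(M^{−1}(c−Ec), ξ)} for all E ∈ H and all j. -/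

import Mathlib

/-!
Both symmetry conditions are conditions on the coefficients `h`, because the characters
`ξ ↦ e^{2πi(n,ξ)}`, `n ∈ ℤ^d`, are linearly independent (Dedekind). For a unimodular `A`, the
identity `f ξ = e^{2πi(v,ξ)} f (Aᵀξ)` for `f = Σₙ h(n) e^{2πi(n,ξ)}` says exactly that
`h(An + v) = h(n)` for all `n`. For the mask take `A = E`, `v = c − Ec`; for the polyphase
component `j` take `A = F := M⁻¹EM`, `v = r_j^E + M⁻¹(c − Ec)`. Since
`M(Fp + r_j^E + M⁻¹(c − Ec)) + s_j = E(Mp + s_j) + c − Ec`, the second condition is the first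
one restricted to the coset `Mℤ^d + s_j`, and these cosets cover `ℤ^d`.
That `F` is again an integer unimodular matrix comes from the finiteness of `H`: `E ↦ MEM⁻¹`
maps `H` injectively into itself, hence onto it.
-/

open Complex Matrix

/-- The trigonometric polynomial with (finitely supported) coefficients `h`. -/
noncomputable def trig {d : ℕ} (h : (Fin d → ℤ) →₀ ℂ) (ξ : Fin d → ℝ) : ℂ :=
  h.sum fun k a => a * Complex.exp (2 * (Real.pi : ℂ) * Complex.I * ∑ j, (k j : ℂ) * (ξ j : ℂ))

/-- A dilation matrix: an integer matrix all of whose (complex) eigenvalues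
exceed `1` in modulus. -/
def IsDilation {d : ℕ} (M : Matrix (Fin d) (Fin d) ℤ) : Prop :=
  ∀ μ : ℂ, (Matrix.charpoly (M.map (Int.cast : ℤ → ℂ))).IsRoot μ → 1 < ‖μ‖

section

variable {d : ℕ}

theorem IsDilation.det_ne_zero {M : Matrix (Fin d) (Fin d) ℤ} (hM : IsDilation M) :
    M.det ≠ 0 := by
  intro h0
  have hroot : (M.map (Int.cast : ℤ → ℂ)).charpoly.IsRoot 0 := by
    have hdet : (M.map (Int.cast : ℤ → ℂ)).det = 0 := by
      simpa [h0] using ((Int.castRingHom ℂ).map_det M).symm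
    rw [Polynomial.IsRoot, eval_charpoly, scalar_apply, diagonal_zero, zero_sub, det_neg, hdet,
      mul_zero]
  have := hM 0 hroot
  norm_num at this

noncomputable def expDot (n : Fin d → ℤ) (ξ : Fin d → ℝ) : ℂ :=
  Complex.exp (2 * (Real.pi : ℂ) * Complex.I * ∑ i, (n i : ℂ) * (ξ i : ℂ))

theorem expDot_add_left (n n' : Fin d → ℤ) (ξ : Fin d → ℝ) :
    expDot (n + n') ξ = expDot n ξ * expDot n' ξ := by
  simp only [expDot, ← Complex.exp_add, Pi.add_apply, Int.cast_add, add_mul,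
    Finset.sum_add_distrib, mul_add]

theorem expDot_add_right (n : Fin d → ℤ) (ξ η : Fin d → ℝ) :
    expDot n (ξ + η) = expDot n ξ * expDot n η := by
  simp only [expDot, ← Complex.exp_add, Pi.add_apply, Complex.ofReal_add, mul_add,
    Finset.sum_add_distrib]

theorem expDot_zero_right (n : Fin d → ℤ) : expDot n 0 = 1 := by
  simp [expDot]

theorem expDot_transpose_mulVec (A : Matrix (Fin d) (Fin d) ℤ) (n : Fin d → ℤ)
    (ξ : Fin d → ℝ) : expDot n (fun i => ∑ j, (A j i : ℝ) * ξ j) = expDot (A *ᵥ n) ξ := by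
  simp only [expDot, mulVec, dotProduct, Int.cast_sum, Int.cast_mul, Complex.ofReal_sum,
    Complex.ofReal_mul, Complex.ofReal_intCast, Finset.mul_sum, Finset.sum_mul]
  rw [Finset.sum_comm]
  refine congrArg Complex.exp (Finset.sum_congr rfl fun _ _ => Finset.sum_congr rfl fun _ _ => ?_)
  ring

theorem expDot_injective : Function.Injective (expDot (d := d)) := by
  intro n n' hnn'
  funext i
  by_contra hne
  have hk : (n i : ℂ) - n' i ≠ 0 := by exact_mod_cast sub_ne_zero.mpr hne
  -- chosen so that the character of `n - n'` takes the value `e^{πi} = -1` at `ξ`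
  set ξ : Fin d → ℝ := Pi.single i (1 / (2 * ((n i : ℝ) - n' i)))
  have hdiff : expDot (n - n') ξ = -1 := by
    rw [expDot, Finset.sum_eq_single i (fun b _ hb => by simp [ξ, hb]) (by simp)]
    have : 2 * (Real.pi : ℂ) * Complex.I * (((n - n') i : ℤ) * ((ξ i : ℝ) : ℂ))
        = Real.pi * Complex.I := by
      simp only [ξ, Pi.single_eq_same, Pi.sub_apply]
      push_cast
      field_simp
    rw [this, Complex.exp_pi_mul_I]
  have hsplit := expDot_add_left n' (n - n') ξ
  rw [add_sub_cancel, hdiff, ← hnn', mul_neg_one] at hsplit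
  exact Complex.exp_ne_zero _ (CharZero.eq_neg_self_iff.mp hsplit)

theorem linearIndependent_expDot : LinearIndependent ℂ (expDot (d := d)) := by
  let χ : (Fin d → ℤ) → Multiplicative (Fin d → ℝ) →* ℂ := fun n =>
    { toFun := fun ξ => expDot n ξ.toAdd
      map_one' := expDot_zero_right n
      map_mul' := fun ξ η => expDot_add_right n ξ.toAdd η.toAdd }
  have hχ : Function.Injective χ := fun n n' h =>
    expDot_injective (funext fun ξ => DFunLike.congr_fun h (Multiplicative.ofAdd ξ))
  exact (linearIndependent_monoidHom _ ℂ).comp χ hχ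

theorem trig_eq_linearCombination (h : (Fin d → ℤ) →₀ ℂ) :
    trig h = Finsupp.linearCombination ℂ expDot h := by
  ext ξ
  simp [trig, Finsupp.linearCombination_apply, Finsupp.sum, expDot]

theorem trig_injective : Function.Injective (trig (d := d)) := by
  intro h h' hh'
  simp only [trig_eq_linearCombination] at hh'
  exact linearIndependent_expDot hh'

noncomputable def unimodularAffineEquiv {A : Matrix (Fin d) (Fin d) ℤ} (hA : IsUnit A)
    (v : Fin d → ℤ) : (Fin d → ℤ) ≃ (Fin d → ℤ) :=
  (toLinearEquiv' A hA.invertible).toEquiv.trans (Equiv.addRight v)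

@[simp]
theorem unimodularAffineEquiv_apply {A : Matrix (Fin d) (Fin d) ℤ} (hA : IsUnit A)
    (v n : Fin d → ℤ) : unimodularAffineEquiv hA v n = A *ᵥ n + v := rfl

theorem trig_equivMapDomain_unimodularAffineEquiv {A : Matrix (Fin d) (Fin d) ℤ}
    (hA : IsUnit A) (v : Fin d → ℤ) (h : (Fin d → ℤ) →₀ ℂ) (ξ : Fin d → ℝ) :
    trig (h.equivMapDomain (unimodularAffineEquiv hA v)) ξ
      = expDot v ξ * trig h (fun i => ∑ j, (A j i : ℝ) * ξ j) := by
  rw [trig_eq_linearCombination, trig_eq_linearCombination, Finsupp.equivMapDomain_eq_mapDomain,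
    Finsupp.linearCombination_mapDomain, Finsupp.linearCombination_apply,
    Finsupp.linearCombination_apply]
  simp only [Finsupp.sum, Finset.sum_apply, Pi.smul_apply, smul_eq_mul, Finset.mul_sum,
    Function.comp_apply, unimodularAffineEquiv_apply, expDot_add_left, expDot_transpose_mulVec]
  exact Finset.sum_congr rfl fun _ _ => by ring

theorem trig_symmetric_iff {A : Matrix (Fin d) (Fin d) ℤ} (hA : IsUnit A) (v : Fin d → ℤ)
    (h : (Fin d → ℤ) →₀ ℂ) :
    (∀ ξ, trig h ξ = expDot v ξ * trig h (fun i => ∑ j, (A j i : ℝ) * ξ j))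
      ↔ ∀ n, h (A *ᵥ n + v) = h n := by
  simp only [← trig_equivMapDomain_unimodularAffineEquiv hA]
  rw [← funext_iff, trig_injective.eq_iff, Finsupp.ext_iff]
  simp only [Finsupp.equivMapDomain_apply]
  constructor
  · intro H n
    have := H (unimodularAffineEquiv hA v n)
    rwa [Equiv.symm_apply_apply] at this
  · intro H n
    have := H ((unimodularAffineEquiv hA v).symm n)
    rwa [← unimodularAffineEquiv_apply hA, Equiv.apply_symm_apply] at this

theorem trig_eq_finsum (h : (Fin d → ℤ) →₀ ℂ) (ξ : Fin d → ℝ) :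
    trig h ξ = ∑ᶠ n, h n * expDot n ξ := by
  rw [finsum_eq_sum_of_support_subset _ fun n hn => Finsupp.mem_support_iff.mpr
    (left_ne_zero_of_mul (Function.mem_support.mp hn))]
  rfl

/-- `√m`-multiple of the polyphase component `μ_{0j}` for the digit `s = s_j`. -/
noncomputable def polyphase (M : Matrix (Fin d) (Fin d) ℤ) (h : (Fin d → ℤ) →₀ ℂ)
    (s : Fin d → ℤ) (ξ : Fin d → ℝ) : ℂ :=
  ∑ᶠ p, h (M *ᵥ p + s) * expDot p ξ

theorem polyphase_symmetric_iff {M A : Matrix (Fin d) (Fin d) ℤ} (hM : M.det ≠ 0)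
    (hA : IsUnit A) (s v : Fin d → ℤ) (h : (Fin d → ℤ) →₀ ℂ) :
    (∀ ξ, polyphase M h s ξ
        = expDot v ξ * polyphase M h s (fun i => ∑ j, (A j i : ℝ) * ξ j))
      ↔ ∀ p, h (M *ᵥ (A *ᵥ p + v) + s) = h (M *ᵥ p + s) := by
  have hinj : Function.Injective fun p => M *ᵥ p + s :=
    (add_left_injective s).comp (mulVec_injective_of_det_ne_zero hM)
  simpa only [polyphase, trig_eq_finsum, Finsupp.comapDomain_apply] using
    trig_symmetric_iff hA v (h.comapDomain _ hinj.injOn)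

theorem exists_mem_mul_eq_mul_of_finite {α : Type*} [Mul α] {M : α} (hM : IsLeftRegular M)
    {H : Set α} (hH : H.Finite) (hMH : ∀ E ∈ H, ∃ E' ∈ H, M * E = E' * M) :
    ∀ E ∈ H, ∃ F ∈ H, M * F = E * M := by
  have : Finite H := hH
  choose f hfH hf using hMH
  let g : H → H := fun E => ⟨f E E.2, hfH E E.2⟩
  have hg : Function.Injective g := fun E₁ E₂ h12 => Subtype.ext <| hM <|
    (hf _ E₁.2).trans <| (congrArg (· * M) (congrArg Subtype.val h12)).trans (hf _ E₂.2).symm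
  intro E hE
  obtain ⟨F, hF⟩ := Finite.injective_iff_surjective.mp hg ⟨E, hE⟩
  exact ⟨F, F.2, (hf _ F.2).trans (congrArg (· * M) (congrArg Subtype.val hF))⟩

theorem transpose_conj_mulVec_of_mul_eq_mul {M E F : Matrix (Fin d) (Fin d) ℤ}
    (hM : M.det ≠ 0) (hMF : M * F = E * M) (ξ : Fin d → ℝ) :
    ((M.map (Int.cast : ℤ → ℝ))ᵀ * (E.map (Int.cast : ℤ → ℝ))ᵀ *
        ((M.map (Int.cast : ℤ → ℝ))ᵀ)⁻¹) *ᵥ ξ = fun i => ∑ j, (F j i : ℝ) * ξ j := by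
  have hcast : ∀ A : Matrix (Fin d) (Fin d) ℤ,
      A.map (Int.cast : ℤ → ℝ) = (Int.castRingHom ℝ).mapMatrix A := fun _ => rfl
  have hdet : IsUnit ((M.map (Int.cast : ℤ → ℝ))ᵀ).det := by
    rw [det_transpose, hcast, ← RingHom.map_det]
    exact isUnit_iff_ne_zero.mpr (Int.cast_ne_zero.mpr hM)
  have hswap : (M.map (Int.cast : ℤ → ℝ))ᵀ * (E.map (Int.cast : ℤ → ℝ))ᵀ
      = (F.map (Int.cast : ℤ → ℝ))ᵀ * (M.map (Int.cast : ℤ → ℝ))ᵀ := by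
    simp only [← transpose_mul, hcast, ← map_mul, hMF]
  rw [hswap, Matrix.mul_assoc, mul_nonsing_inv _ hdet, Matrix.mul_one]
  ext i
  simp [mulVec, dotProduct, mul_comm]

theorem polyphase_symmetric_iff_of_mul_eq_mul {M E F : Matrix (Fin d) (Fin d) ℤ}
    (hM : M.det ≠ 0) (hF : IsUnit F) (hMF : M * F = E * M) {s r q c : Fin d → ℤ}
    (hr : E *ᵥ s = M *ᵥ r + s) (hq : M *ᵥ q = c - E *ᵥ c) (h : (Fin d → ℤ) →₀ ℂ) {κ : ℂ}
    (hκ : κ ≠ 0) :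
    (∀ ξ, κ * polyphase M h s ξ =
        κ * polyphase M h s (((M.map (Int.cast : ℤ → ℝ))ᵀ * (E.map (Int.cast : ℤ → ℝ))ᵀ *
          ((M.map (Int.cast : ℤ → ℝ))ᵀ)⁻¹) *ᵥ ξ) * expDot r ξ * expDot q ξ)
      ↔ ∀ p, h (E *ᵥ (M *ᵥ p + s) + (c - E *ᵥ c)) = h (M *ᵥ p + s) := by
  have hcoset : ∀ p, M *ᵥ (F *ᵥ p + (r + q)) + s = E *ᵥ (M *ᵥ p + s) + (c - E *ᵥ c) := by
    intro p
    rw [mulVec_add, mulVec_add, mulVec_mulVec, hMF, ← mulVec_mulVec, hq, mulVec_add, hr]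
    abel
  simp only [transpose_conj_mulVec_of_mul_eq_mul hM hMF, ← hcoset]
  refine (forall_congr' fun ξ => ?_).trans (polyphase_symmetric_iff hM hF s (r + q) h)
  rw [expDot_add_left, mul_assoc, mul_assoc, mul_comm (polyphase _ _ _ _), mul_right_inj' hκ]

end

theorem stmt13_general {d : ℕ} (M : Matrix (Fin d) (Fin d) ℤ) (hMdil : IsDilation M)
    (m : ℕ) (hm : m = M.det.natAbs)
    (s : Fin m → (Fin d → ℤ))
    (hdig : ∀ n : Fin d → ℤ, ∃! k : Fin m, ∃ p : Fin d → ℤ, n = M.mulVec p + s k)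
    (H : Set (Matrix (Fin d) (Fin d) ℤ))
    (hHfin : H.Finite)
    (hHdet : ∀ E ∈ H, E.det = 1 ∨ E.det = -1)
    (hMH : ∀ E ∈ H, ∃ E' ∈ H, M * E = E' * M)
    (r : Matrix (Fin d) (Fin d) ℤ → Fin m → (Fin d → ℤ))
    (hr : ∀ E ∈ H, ∀ j : Fin m, E.mulVec (s j) = M.mulVec (r E j) + s j)
    (c : Fin d → ℤ)
    (q : Matrix (Fin d) (Fin d) ℤ → (Fin d → ℤ))
    (hq : ∀ E ∈ H, M.mulVec (q E) = c - E.mulVec c)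
    (h : (Fin d → ℤ) →₀ ℂ)
    (μ : Fin m → (Fin d → ℝ) → ℂ)
    (hμ : ∀ j (ξ : Fin d → ℝ), μ j ξ =
      (1 / Real.sqrt m : ℝ) * ∑ᶠ p : Fin d → ℤ,
        h (M.mulVec p + s j) *
          Complex.exp (2 * (Real.pi : ℂ) * Complex.I * ∑ i, (p i : ℂ) * (ξ i : ℂ))) :
    -- `H`-symmetry of the mask `m₀ = trig h` with respect to the center `c`
    (∀ E ∈ H, ∀ ξ : Fin d → ℝ, trig h ξ =
        Complex.exp (2 * (Real.pi : ℂ) * Complex.I *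
            ∑ i, ((c i - E.mulVec c i : ℤ) : ℂ) * (ξ i : ℂ)) *
          trig h (fun i => ∑ j, (E j i : ℝ) * ξ j)) ↔
    -- the corresponding symmetry of the polyphase components
    (∀ E ∈ H, ∀ j : Fin m, ∀ ξ : Fin d → ℝ, μ j ξ =
        μ j (((M.map (Int.cast : ℤ → ℝ))ᵀ * (E.map (Int.cast : ℤ → ℝ))ᵀ *
              ((M.map (Int.cast : ℤ → ℝ))ᵀ)⁻¹).mulVec ξ) *
          Complex.exp (2 * (Real.pi : ℂ) * Complex.I * ∑ i, (r E j i : ℂ) * (ξ i : ℂ)) *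
          Complex.exp (2 * (Real.pi : ℂ) * Complex.I * ∑ i, (q E i : ℂ) * (ξ i : ℂ))) := by
  have hM : M.det ≠ 0 := hMdil.det_ne_zero
  have hunit : ∀ E ∈ H, IsUnit E := fun E hE =>
    (isUnit_iff_isUnit_det E).mpr (Int.isUnit_iff.mpr (hHdet E hE))
  have hconj : ∀ E ∈ H, ∃ F ∈ H, M * F = E * M := exists_mem_mul_eq_mul_of_finite
    (isRegular_of_isLeftRegular_det (IsRegular.of_ne_zero hM).left).left hHfin hMH
  have hκ : ((1 / Real.sqrt m : ℝ) : ℂ) ≠ 0 := by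
    have hm0 : 0 < m := hm ▸ Int.natAbs_pos.mpr hM
    exact Complex.ofReal_ne_zero.mpr (one_div_ne_zero (Real.sqrt_pos.mpr (mod_cast hm0)).ne')
  refine (forall₂_congr fun E hE => trig_symmetric_iff (hunit E hE) (c - E *ᵥ c) h).trans
    ((forall₂_congr fun E hE => forall_congr' fun j =>
      (?_ : _ ↔ ∀ p, h (E *ᵥ (M *ᵥ p + s j) + (c - E *ᵥ c)) = h (M *ᵥ p + s j))).trans ?_).symm
  · obtain ⟨F, hF, hMF⟩ := hconj E hE
    simp only [hμ]
    exact polyphase_symmetric_iff_of_mul_eq_mul hM (hunit F hF) hMF (hr E hE j) (hq E hE) h hκ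
  · refine ⟨fun hcoset E hE n => ?_, fun hall E hE j p => hall E hE _⟩
    obtain ⟨k, ⟨p, rfl⟩, -⟩ := hdig n
    exact hcoset E hE k p

/-- Lemma 13 of the paper: a mask is `H`-symmetric with respect to an integer
center `c` iff its polyphase components satisfy
`μ_{0j}(ξ) = μ_{0j}(M^*E^*M^{*-1}ξ) e^{2πi(r_j^E,ξ)} e^{2πi(M⁻¹(c-Ec),ξ)}`. -/
theorem stmt13 {d : ℕ} (M : Matrix (Fin d) (Fin d) ℤ) (hMdil : IsDilation M)
    (m : ℕ) (hm : m = M.det.natAbs)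
    (s : Fin m → (Fin d → ℤ))
    (hdig : ∀ n : Fin d → ℤ, ∃! k : Fin m, ∃ p : Fin d → ℤ, n = M.mulVec p + s k)
    (H : Set (Matrix (Fin d) (Fin d) ℤ))
    (hHfin : H.Finite) (hHone : (1 : Matrix (Fin d) (Fin d) ℤ) ∈ H)
    (hHmul : ∀ E ∈ H, ∀ F ∈ H, E * F ∈ H)
    (hHinv : ∀ E ∈ H, ∃ F ∈ H, E * F = 1)
    (hHdet : ∀ E ∈ H, E.det = 1 ∨ E.det = -1)
    (hMH : ∀ E ∈ H, ∃ E' ∈ H, M * E = E' * M)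
    (r : Matrix (Fin d) (Fin d) ℤ → Fin m → (Fin d → ℤ))
    (hr : ∀ E ∈ H, ∀ j : Fin m, E.mulVec (s j) = M.mulVec (r E j) + s j)
    (c : Fin d → ℤ)
    (q : Matrix (Fin d) (Fin d) ℤ → (Fin d → ℤ))
    (hq : ∀ E ∈ H, M.mulVec (q E) = c - E.mulVec c)
    (h : (Fin d → ℤ) →₀ ℂ)
    (μ : Fin m → (Fin d → ℝ) → ℂ)
    (hμ : ∀ j (ξ : Fin d → ℝ), μ j ξ =
      (1 / Real.sqrt m : ℝ) * ∑ᶠ p : Fin d → ℤ,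
        h (M.mulVec p + s j) *
          Complex.exp (2 * (Real.pi : ℂ) * Complex.I * ∑ i, (p i : ℂ) * (ξ i : ℂ))) :
    -- `H`-symmetry of the mask `m₀ = trig h` with respect to the center `c`
    (∀ E ∈ H, ∀ ξ : Fin d → ℝ, trig h ξ =
        Complex.exp (2 * (Real.pi : ℂ) * Complex.I *
            ∑ i, ((c i - E.mulVec c i : ℤ) : ℂ) * (ξ i : ℂ)) *
          trig h (fun i => ∑ j, (E j i : ℝ) * ξ j)) ↔
    -- the corresponding symmetry of the polyphase components
    (∀ E ∈ H, ∀ j : Fin m, ∀ ξ : Fin d → ℝ, μ j ξ =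
        μ j (((M.map (Int.cast : ℤ → ℝ))ᵀ * (E.map (Int.cast : ℤ → ℝ))ᵀ *
              ((M.map (Int.cast : ℤ → ℝ))ᵀ)⁻¹).mulVec ξ) *
          Complex.exp (2 * (Real.pi : ℂ) * Complex.I * ∑ i, (r E j i : ℂ) * (ξ i : ℂ)) *
          Complex.exp (2 * (Real.pi : ℂ) * Complex.I * ∑ i, (q E i : ℂ) * (ξ i : ℂ))) :=
  stmt13_general M hMdil m hm s hdig H hHfin hHdet hMH r hr c q hq h μ hμ
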